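/- Let d ≥ 1, let C₁ : ℝ^d → ℝ be a stationary covariance function, let φ₂ ∈ Φ_d be such that the map h ↦ φ₂(‖h‖) is twice continuously differentiable on ℝ^d, let u be a unit vector in ℝ^d, and let a₂ > 0 and b₁, b₂ ≥ 0 be constants. Then the function T : ℝ^d → ℝ defined by T(h) = b₁ C₁(h) − b₂ [ cos²θ(h,u) · φ₂''(√a₂ ‖h‖) + sin²θ(h,u) · φ₂'(√a₂ ‖h‖)/(√a₂ ‖h‖) ] for h ≠ 0, and T(0) = b₁ C₁(0) − b₂ φ₂''(0), is a stationary covariance function on ℝ^d. -/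

import Mathlib

open MeasureTheory
open scoped BigOperators RealInnerProductSpace

noncomputable section

/-- A function `C : ℝ^d → ℝ` is a stationary covariance function if it is
positive semidefinite. -/
def IsStationaryCovariance (d : ℕ) (C : EuclideanSpace ℝ (Fin d) → ℝ) : Prop :=
  ∀ (n : ℕ) (x : Fin n → EuclideanSpace ℝ (Fin d)) (v : Fin n → ℝ),
    0 ≤ ∑ i, ∑ j, v i * v j * C (x i - x j)

/-- `φ : [0,∞) → ℝ` belongs to the class `Φ_d`. -/
def MemPhi (d : ℕ) (φ : ℝ → ℝ) : Prop :=
  ContinuousOn φ (Set.Ici 0) ∧ IsStationaryCovariance d (fun h => φ ‖h‖)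

/-- `f` is a `d`-radial spectral density of `φ`. -/
def IsRadialSpectralDensity (d : ℕ) (φ f : ℝ → ℝ) : Prop :=
  (∀ u : ℝ, 0 ≤ u → 0 ≤ f u) ∧
  MeasureTheory.Integrable (fun ω : EuclideanSpace ℝ (Fin d) => f ‖ω‖) ∧
  ∀ h : EuclideanSpace ℝ (Fin d),
    (φ ‖h‖ : ℂ) = ∫ ω : EuclideanSpace ℝ (Fin d),
      Complex.exp (Complex.I * ((⟪h, ω⟫ : ℝ) : ℂ)) * ((f ‖ω‖ : ℝ) : ℂ)

/-- The quadratic form `hᵀ A h`. -/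
def quadForm {d : ℕ} (A : Matrix (Fin d) (Fin d) ℝ) (h : EuclideanSpace ℝ (Fin d)) : ℝ :=
  ∑ i, ∑ j, h i * A i j * h j

/-!
Let `g h = φ₂ ‖h‖`. The second differences `2 g h - g (h + ε • u) - g (h - ε • u)` of a
covariance are covariances, so dividing by `ε ^ 2` and letting `ε → 0` shows that `-∂ᵤ² g`
(iterated `lineDeriv`) is a covariance. For `h ≠ 0` the chain rule gives
`∂ᵤ² g h = cos² θ(h, u) φ₂'' ‖h‖ + sin² θ(h, u) φ₂' ‖h‖ / ‖h‖`, and `∂ᵤ² g 0 = φ₂'' 0` by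
continuity of `∂ᵤ² g`. Hence `T h = b₁ C₁ h + b₂ (-∂ᵤ² g (√a₂ • h))`, a nonnegative combination
of covariances.
-/

open Filter Topology

theorem tendsto_second_difference_div_sq {f f' : ℝ → ℝ} {c : ℝ}
    (hf : ∀ t, HasDerivAt f (f' t) t) (hf' : HasDerivAt f' c 0) :
    Tendsto (fun ε => (2 * f 0 - f ε - f (-ε)) / ε ^ 2) (𝓝[≠] 0) (𝓝 (-c)) := by
  have hf_neg (ε : ℝ) : HasDerivAt (fun ε => f (-ε)) (-f' (-ε)) ε := by
    simpa [Function.comp_def] using (hf (-ε)).comp ε (hasDerivAt_neg ε)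
  have hf'_neg : HasDerivAt (fun ε => f' (-ε)) (-c) 0 := by
    have hf'₀ : HasDerivAt f' c (-0) := by rwa [neg_zero]
    simpa [Function.comp_def] using hf'₀.comp 0 (hasDerivAt_neg 0)
  have hdiv : Tendsto (fun ε => (-f' ε + f' (-ε)) / (2 * ε)) (𝓝[≠] 0) (𝓝 (-c)) := by
    have := (hf'.neg.fun_add hf'_neg).tendsto_slope_zero.div_const 2
    rw [show (-c + -c) / 2 = -c by ring] at this
    refine this.congr' (eventually_nhdsWithin_of_forall fun ε (hε : ε ≠ 0) => ?_)
    simp only [Pi.neg_apply, zero_add, neg_zero, neg_add_cancel, sub_zero, smul_eq_mul]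
    field_simp
  have hcont : Continuous (fun ε => 2 * f 0 - f ε - f (-ε)) :=
    continuous_iff_continuousAt.2 fun ε => (((hf ε).const_sub _).fun_sub (hf_neg ε)).continuousAt
  refine HasDerivAt.lhopital_zero_nhdsNE (f' := fun ε => -f' ε + f' (-ε)) (g' := fun ε => 2 * ε)
    (Eventually.of_forall fun ε => ?_) (Eventually.of_forall fun ε => ?_)
    (eventually_nhdsWithin_of_forall fun ε (hε : ε ≠ 0) => by positivity) ?_ ?_ hdiv
  · exact (((hf ε).const_sub (2 * f 0)).fun_sub (hf_neg ε)).congr_deriv (by ring)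
  · simpa using hasDerivAt_pow 2 ε
  · exact tendsto_nhdsWithin_of_tendsto_nhds (by simpa [two_mul] using hcont.tendsto 0)
  · exact tendsto_nhdsWithin_of_tendsto_nhds (by simpa using (continuous_pow 2).tendsto (0 : ℝ))

namespace IsStationaryCovariance

variable {d : ℕ} {C C' : EuclideanSpace ℝ (Fin d) → ℝ}

theorem add (hC : IsStationaryCovariance d C) (hC' : IsStationaryCovariance d C') :
    IsStationaryCovariance d (fun h => C h + C' h) := fun n x v => by
  simpa only [mul_add, Finset.sum_add_distrib] using add_nonneg (hC n x v) (hC' n x v)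

theorem const_mul (hC : IsStationaryCovariance d C) {c : ℝ} (hc : 0 ≤ c) :
    IsStationaryCovariance d (fun h => c * C h) := fun n x v => by
  refine (mul_nonneg hc (hC n x v)).trans_eq ?_
  simp only [Finset.mul_sum]
  refine Finset.sum_congr rfl fun i _ => Finset.sum_congr rfl fun j _ => ?_
  ring

theorem comp_smul (hC : IsStationaryCovariance d C) (c : ℝ) :
    IsStationaryCovariance d (fun h => C (c • h)) := fun n x v => by
  simpa only [smul_sub] using hC n (fun i => c • x i) v

/-- Pairing the points `x i` (weights `v i`) with `x i + w` (weights `-v i`). -/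
theorem second_difference (hC : IsStationaryCovariance d C) (w : EuclideanSpace ℝ (Fin d)) :
    IsStationaryCovariance d (fun h => 2 * C h - C (h + w) - C (h - w)) := fun n x v => by
  have := hC (n + n) (Fin.append x fun i => x i + w) (Fin.append v fun i => -v i)
  simp only [Fin.sum_univ_add, Fin.append_left, Fin.append_right, sub_add_eq_sub_sub,
    add_sub_right_comm, sub_add_cancel] at this
  refine this.trans_eq ?_
  simp only [← Finset.sum_add_distrib]
  refine Finset.sum_congr rfl fun i _ => Finset.sum_congr rfl fun j _ => ?_
  ring

theorem of_tendsto {ι : Type*} {l : Filter ι} [l.NeBot] {F : ι → EuclideanSpace ℝ (Fin d) → ℝ}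
    (hF : ∀ᶠ i in l, IsStationaryCovariance d (F i))
    (hlim : ∀ h, Tendsto (fun i => F i h) l (𝓝 (C h))) : IsStationaryCovariance d C :=
  fun n x v => ge_of_tendsto
    (tendsto_finsetSum _ fun _ _ => tendsto_finsetSum _ fun _ _ => (hlim _).const_mul _)
    (hF.mono fun _ hi => hi n x v)

end IsStationaryCovariance

section LineDeriv

variable {E F : Type*} [NormedAddCommGroup E] [NormedSpace ℝ E] [NormedAddCommGroup F]
  [NormedSpace ℝ F]

theorem Differentiable.hasDerivAt_comp_add_smul {f : E → F} (hf : Differentiable ℝ f)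
    (x v : E) (t : ℝ) :
    HasDerivAt (fun s : ℝ => f (x + s • v)) (lineDeriv ℝ f (x + t • v) v) t := by
  rw [(hf _).lineDeriv_eq_fderiv]
  exact (hf _).hasFDerivAt.comp_hasDerivAt t
    (by simpa using ((hasDerivAt_id t).smul_const v).const_add x)

theorem ContDiff.lineDeriv {f : E → F} {m n : WithTop ℕ∞} (hf : ContDiff ℝ n f)
    (hmn : m + 1 ≤ n) (v : E) : ContDiff ℝ m (fun x => lineDeriv ℝ f x v) := by
  have hdiff : Differentiable ℝ f := hf.differentiable (by rintro rfl; simp at hmn)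
  rw [funext fun x => (hdiff x).lineDeriv_eq_fderiv]
  exact (hf.fderiv_right hmn).clm_apply contDiff_const

end LineDeriv

theorem IsStationaryCovariance.neg_lineDeriv_lineDeriv {d : ℕ}
    {g : EuclideanSpace ℝ (Fin d) → ℝ} (hg : IsStationaryCovariance d g) (hg2 : ContDiff ℝ 2 g)
    (u : EuclideanSpace ℝ (Fin d)) :
    IsStationaryCovariance d (fun h => -lineDeriv ℝ (fun y => lineDeriv ℝ g y u) h u) := by
  have hg1 : ContDiff ℝ 1 (fun y => lineDeriv ℝ g y u) := hg2.lineDeriv (by norm_num) u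
  refine of_tendsto (l := 𝓝[≠] (0 : ℝ))
    (F := fun ε h => (ε ^ 2)⁻¹ * (2 * g h - g (h + ε • u) - g (h - ε • u)))
    (Eventually.of_forall fun ε => (hg.second_difference (ε • u)).const_mul (by positivity))
    fun h => ?_
  have := tendsto_second_difference_div_sq
    ((hg2.differentiable two_ne_zero).hasDerivAt_comp_add_smul h u)
    (by simpa using (hg1.differentiable one_ne_zero).hasDerivAt_comp_add_smul h u 0)
  simpa [div_eq_inv_mul, ← sub_eq_add_neg] using this

section Radial

variable {E : Type*} [NormedAddCommGroup E] [InnerProductSpace ℝ E] {φ φ' φ'' : ℝ → ℝ}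

theorem hasDerivAt_norm_add_smul {x u : E} {t : ℝ} (h : x + t • u ≠ 0) :
    HasDerivAt (fun s : ℝ => ‖x + s • u‖) (⟪x + t • u, u⟫ / ‖x + t • u‖) t := by
  have hline : HasDerivAt (fun s : ℝ => x + s • u) u t := by
    simpa using ((hasDerivAt_id t).smul_const u).const_add x
  have := hline.norm_sq.sqrt (by positivity)
  simp only [Real.sqrt_sq (norm_nonneg _)] at this
  exact this.congr_deriv (by field_simp)

theorem lineDeriv_comp_norm (hφ : ∀ t ∈ Set.Ioi (0 : ℝ), HasDerivAt φ (φ' t) t) {x : E}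
    (hx : x ≠ 0) (u : E) :
    lineDeriv ℝ (fun y => φ ‖y‖) x u = φ' ‖x‖ * (⟪x, u⟫ / ‖x‖) := by
  have hx0 : x + (0 : ℝ) • u ≠ 0 := by simpa using hx
  refine HasLineDerivAt.lineDeriv ?_
  simpa [HasLineDerivAt, Function.comp_def] using
    (hφ _ (norm_pos_iff.2 hx0)).comp 0 (hasDerivAt_norm_add_smul hx0)

theorem lineDeriv_lineDeriv_comp_norm (hφ : ∀ t ∈ Set.Ioi (0 : ℝ), HasDerivAt φ (φ' t) t)
    (hφ' : ∀ t ∈ Set.Ioi (0 : ℝ), HasDerivAt φ' (φ'' t) t) {x : E} (hx : x ≠ 0) (u : E) :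
    lineDeriv ℝ (fun y => lineDeriv ℝ (fun y => φ ‖y‖) y u) x u =
      (⟪x, u⟫ / ‖x‖) ^ 2 * φ'' ‖x‖ + (‖u‖ ^ 2 - (⟪x, u⟫ / ‖x‖) ^ 2) * (φ' ‖x‖ / ‖x‖) := by
  have hev : (fun y => lineDeriv ℝ (fun y => φ ‖y‖) y u) =ᶠ[𝓝 x]
      fun y => φ' ‖y‖ * (⟪y, u⟫ / ‖y‖) :=
    (eventually_ne_nhds hx).mono fun y hy => lineDeriv_comp_norm hφ hy u
  rw [hev.lineDeriv_eq]
  have hx0 : x + (0 : ℝ) • u ≠ 0 := by simpa using hx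
  have hnorm := hasDerivAt_norm_add_smul hx0
  have hinner : HasDerivAt (fun s : ℝ => ⟪x + s • u, u⟫) (‖u‖ ^ 2) 0 := by
    simp only [inner_add_left, real_inner_smul_left, real_inner_self_eq_norm_sq]
    simpa using ((hasDerivAt_id (0 : ℝ)).mul_const (‖u‖ ^ 2)).const_add ⟪x, u⟫
  have := ((hφ' _ (norm_pos_iff.2 hx0)).comp 0 hnorm).fun_mul
    (hinner.fun_div hnorm (norm_ne_zero_iff.2 hx0))
  refine HasLineDerivAt.lineDeriv (this.congr_deriv ?_)
  have hx' : ‖x‖ ≠ 0 := norm_ne_zero_iff.2 hx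
  simp only [Function.comp_apply, zero_smul, add_zero]
  field_simp

theorem lineDeriv_lineDeriv_comp_norm_zero (hφ : ∀ t ∈ Set.Ioi (0 : ℝ), HasDerivAt φ (φ' t) t)
    (hφ' : ∀ t ∈ Set.Ioi (0 : ℝ), HasDerivAt φ' (φ'' t) t)
    (hφ''₀ : ContinuousWithinAt φ'' (Set.Ioi 0) 0) {u : E} (hu : ‖u‖ = 1)
    (hcont : ContinuousAt
      (fun x => lineDeriv ℝ (fun y => lineDeriv ℝ (fun y => φ ‖y‖) y u) x u) 0) :
    lineDeriv ℝ (fun y => lineDeriv ℝ (fun y => φ ‖y‖) y u) 0 u = φ'' 0 := by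
  have hline : Tendsto (fun t : ℝ => t • u) (𝓝[>] 0) (𝓝 0) :=
    ((continuous_id.smul continuous_const : Continuous fun t : ℝ => t • u).tendsto' 0 0
      (zero_smul ℝ u)).mono_left nhdsWithin_le_nhds
  refine tendsto_nhds_unique (hcont.tendsto.comp hline) (hφ''₀.tendsto.congr' ?_)
  filter_upwards [self_mem_nhdsWithin] with t (ht : 0 < t)
  have hnorm : ‖t • u‖ = t := by rw [norm_smul, hu, mul_one, Real.norm_of_nonneg ht.le]
  have hcos : ⟪t • u, u⟫ / ‖t • u‖ = 1 := by
    rw [hnorm, real_inner_smul_left, real_inner_self_eq_norm_sq, hu]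
    field_simp
  have htu : t • u ≠ 0 := norm_ne_zero_iff.1 (hnorm.symm ▸ ht.ne')
  rw [Function.comp_apply, lineDeriv_lineDeriv_comp_norm hφ hφ' htu, hcos, hnorm, hu]
  ring

end Radial

theorem statement_5_general (d : ℕ) (C₁ : EuclideanSpace ℝ (Fin d) → ℝ)
    (hC₁ : IsStationaryCovariance d C₁) (φ₂ φ₂' φ₂'' : ℝ → ℝ)
    (hφ₂ : MemPhi d φ₂)
    (hsmooth : ContDiff ℝ 2 (fun h : EuclideanSpace ℝ (Fin d) => φ₂ ‖h‖))
    (hderiv1 : ∀ t ∈ Set.Ioi (0 : ℝ), HasDerivAt φ₂ (φ₂' t) t)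
    (hderiv2 : ∀ t ∈ Set.Ioi (0 : ℝ), HasDerivAt φ₂' (φ₂'' t) t)
    (hcont2 : ContinuousOn φ₂'' (Set.Ici 0))
    (u : EuclideanSpace ℝ (Fin d)) (hu : ‖u‖ = 1)
    (a₂ b₁ b₂ : ℝ) (ha₂ : 0 < a₂) (hb₁ : 0 ≤ b₁) (hb₂ : 0 ≤ b₂)
    (T : EuclideanSpace ℝ (Fin d) → ℝ)
    (hT0 : T 0 = b₁ * C₁ 0 - b₂ * φ₂'' 0)
    (hT : ∀ h : EuclideanSpace ℝ (Fin d), h ≠ 0 →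
      T h = b₁ * C₁ h -
        b₂ * (((⟪h, u⟫ : ℝ) / ‖h‖) ^ 2 * φ₂'' (Real.sqrt a₂ * ‖h‖) +
          (1 - ((⟪h, u⟫ : ℝ) / ‖h‖) ^ 2) *
            (φ₂' (Real.sqrt a₂ * ‖h‖) / (Real.sqrt a₂ * ‖h‖)))) :
    IsStationaryCovariance d T := by
  set S : EuclideanSpace ℝ (Fin d) → ℝ :=
    fun x => lineDeriv ℝ (fun y => lineDeriv ℝ (fun y => φ₂ ‖y‖) y u) x u
  have hS_cont : Continuous S :=
    ((hsmooth.lineDeriv (m := 1) (by norm_num) u).lineDeriv (m := 0) (by norm_num) u).continuous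
  have hS0 : S 0 = φ₂'' 0 :=
    lineDeriv_lineDeriv_comp_norm_zero hderiv1 hderiv2
      ((hcont2 0 Set.self_mem_Ici).mono Set.Ioi_subset_Ici_self) hu hS_cont.continuousAt
  have hT_eq : T = fun h => b₁ * C₁ h + b₂ * -S (Real.sqrt a₂ • h) := by
    funext h
    rcases eq_or_ne h 0 with rfl | hh
    · rw [hT0, smul_zero, hS0]
      ring
    have hsa : 0 < Real.sqrt a₂ := Real.sqrt_pos.2 ha₂
    have hnorm : ‖Real.sqrt a₂ • h‖ = Real.sqrt a₂ * ‖h‖ := by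
      rw [norm_smul, Real.norm_of_nonneg hsa.le]
    have hcos : ⟪Real.sqrt a₂ • h, u⟫ / ‖Real.sqrt a₂ • h‖ = ⟪h, u⟫ / ‖h‖ := by
      rw [hnorm, real_inner_smul_left, mul_div_mul_left _ _ hsa.ne']
    rw [hT h hh, show S (Real.sqrt a₂ • h) = _ from
      lineDeriv_lineDeriv_comp_norm hderiv1 hderiv2 (smul_ne_zero hsa.ne' hh) u, hcos, hnorm, hu]
    ring
  rw [hT_eq]
  exact (hC₁.const_mul hb₁).add
    (((hφ₂.2.neg_lineDeriv_lineDeriv hsmooth u).comp_smul _).const_mul hb₂)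

theorem statement_5 (d : ℕ) (hd : 1 ≤ d) (C₁ : EuclideanSpace ℝ (Fin d) → ℝ)
    (hC₁ : IsStationaryCovariance d C₁) (φ₂ φ₂' φ₂'' : ℝ → ℝ)
    (hφ₂ : MemPhi d φ₂)
    (hsmooth : ContDiff ℝ 2 (fun h : EuclideanSpace ℝ (Fin d) => φ₂ ‖h‖))
    (hderiv1 : ∀ t ∈ Set.Ioi (0 : ℝ), HasDerivAt φ₂ (φ₂' t) t)
    (hderiv2 : ∀ t ∈ Set.Ioi (0 : ℝ), HasDerivAt φ₂' (φ₂'' t) t)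
    (hcont1 : ContinuousOn φ₂' (Set.Ici 0)) (hcont2 : ContinuousOn φ₂'' (Set.Ici 0))
    (u : EuclideanSpace ℝ (Fin d)) (hu : ‖u‖ = 1)
    (a₂ b₁ b₂ : ℝ) (ha₂ : 0 < a₂) (hb₁ : 0 ≤ b₁) (hb₂ : 0 ≤ b₂)
    (T : EuclideanSpace ℝ (Fin d) → ℝ)
    (hT0 : T 0 = b₁ * C₁ 0 - b₂ * φ₂'' 0)
    (hT : ∀ h : EuclideanSpace ℝ (Fin d), h ≠ 0 →
      T h = b₁ * C₁ h -
        b₂ * (((⟪h, u⟫ : ℝ) / ‖h‖) ^ 2 * φ₂'' (Real.sqrt a₂ * ‖h‖) +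
          (1 - ((⟪h, u⟫ : ℝ) / ‖h‖) ^ 2) *
            (φ₂' (Real.sqrt a₂ * ‖h‖) / (Real.sqrt a₂ * ‖h‖)))) :
    IsStationaryCovariance d T :=
  statement_5_general d C₁ hC₁ φ₂ φ₂' φ₂'' hφ₂ hsmooth hderiv1 hderiv2 hcont2 u hu a₂ b₁ b₂ ha₂ hb₁
    hb₂ T hT0 hT
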